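/- A function f : {t, f, b, n}ⁿ → {t, f, b, n} is a matrix function of the matrix M^{BD,→,⊥} (i.e., is obtainable by composition from projections and the truth functions of ¬, ∧, ∨, →, ⊥) if and only if f maps {t, f, b}ⁿ into {t, f, b} and maps {t, f, n}ⁿ into {t, f, n}. Equivalently, an n-ary connective ◊ with intended interpretation ◊̂ is definable in BD^{→,⊥,◊} iff ◊̂ preserves both {t, f, b} and {t, f, n}. -/

import Mathlib

namespace BD12

/-- The four truth values of Belnap-Dunn logic:
`t` (true), `f` (false), `b` (both true and false), `n` (neither true nor false). -/
inductive V4 : Type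
  | t | f | b | n
deriving DecidableEq, Repr

namespace V4

/-- `a` lies above truth in the Belnap-Dunn bilattice (i.e. `a ∈ {t, b}`). -/
def hasT : V4 → Bool
  | t => true
  | b => true
  | _ => false

/-- `a` lies above falsity in the Belnap-Dunn bilattice (i.e. `a ∈ {f, b}`). -/
def hasF : V4 → Bool
  | f => true
  | b => true
  | _ => false

def ofTF : Bool → Bool → V4
  | true, true => b
  | true, false => t
  | false, true => f
  | false, false => n

/-- Interpretation of ¬: swaps `t` and `f`, fixes `b` and `n`. -/
def neg4 : V4 → V4
  | t => f
  | f => t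
  | b => b
  | n => n

/-- Interpretation of ∧: greatest lower bound in the lattice order on `V4`
with `f` least, `t` greatest, `b` and `n` incomparable. -/
def and4 (x y : V4) : V4 := ofTF (x.hasT && y.hasT) (x.hasF || y.hasF)

/-- Interpretation of ∨: least upper bound in the lattice order on `V4`
with `f` least, `t` greatest, `b` and `n` incomparable. -/
def or4 (x y : V4) : V4 := ofTF (x.hasT || y.hasT) (x.hasF && y.hasF)

/-- Interpretation of →: `a₁ → a₂ = t` if `a₁ ∉ {t, b}`, and `a₂` otherwise. -/
def imp4 (x y : V4) : V4 := if x = t ∨ x = b then y else t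

/-- The designated truth values: `t` and `b`. -/
def desig (x : V4) : Prop := x = t ∨ x = b

end V4

/-- Formulas of the expansion BD^{→,⊥} of Belnap-Dunn logic,
over the connectives ¬, ∧, ∨, →, ⊥. -/
inductive Fm : Type
  | var : ℕ → Fm
  | neg : Fm → Fm
  | and : Fm → Fm → Fm
  | or : Fm → Fm → Fm
  | imp : Fm → Fm → Fm
  | bot : Fm
deriving DecidableEq

/-- The valuation in the matrix `M^{BD,→,⊥}` determined by an assignment of
truth values to the propositional variables. -/
def val (v : ℕ → V4) : Fm → V4
  | .var p => v p
  | .neg A => V4.neg4 (val v A)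
  | .and A B => V4.and4 (val v A) (val v B)
  | .or A B => V4.or4 (val v A) (val v B)
  | .imp A B => V4.imp4 (val v A) (val v B)
  | .bot => V4.f

/-- The set of propositional variables occurring in a formula. -/
def fvars : Fm → Set ℕ
  | .var p => {p}
  | .neg A => fvars A
  | .and A B => fvars A ∪ fvars B
  | .or A B => fvars A ∪ fvars B
  | .imp A B => fvars A ∪ fvars B
  | .bot => ∅

/-- The matrix functions of `M^{BD,→,⊥}`: the functions on the truth values
obtainable by composition from projections and the truth functions of
¬, ∧, ∨, →, ⊥. -/
inductive IsMF : {k : ℕ} → ((Fin k → V4) → V4) → Prop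
  | proj {k : ℕ} (i : Fin k) : IsMF (fun a => a i)
  | bot {k : ℕ} : IsMF (fun _ : Fin k → V4 => V4.f)
  | neg {k : ℕ} {g : (Fin k → V4) → V4} :
      IsMF g → IsMF (fun a => V4.neg4 (g a))
  | and {k : ℕ} {g h : (Fin k → V4) → V4} :
      IsMF g → IsMF h → IsMF (fun a => V4.and4 (g a) (h a))
  | or {k : ℕ} {g h : (Fin k → V4) → V4} :
      IsMF g → IsMF h → IsMF (fun a => V4.or4 (g a) (h a))
  | imp {k : ℕ} {g h : (Fin k → V4) → V4} :
      IsMF g → IsMF h → IsMF (fun a => V4.imp4 (g a) (h a))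

/-!
Every connective preserves both `{t, f, b}` and `{t, f, n}`, hence so does every matrix
function. Conversely, a function `g` preserving both sets agrees at each point `c` with some
matrix function: with a constant when `g c ∈ {t, f}`, and with `aᵢ ∧ ¬aᵢ` when `g c ∈ {b, n}`,
for an `i` with `cᵢ = g c`, which exists because otherwise `c` would lie in the set among
`{t, f, b}ⁿ`, `{t, f, n}ⁿ` whose image misses `g c`. The characteristic functions `χ_c` of points
are matrix functions, so these local witnesses glue by `(χ_c ∧ h) ∨ (¬χ_c ∧ h')` into `g`.
-/

open V4

instance : Fintype V4 := ⟨{t, f, b, n}, fun x => by cases x <;> decide⟩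

namespace V4

open Classical in
noncomputable def ofProp (p : Prop) : V4 := if p then t else f

@[simp] lemma and4_t (x : V4) : and4 t x = x := by cases x <;> rfl
@[simp] lemma and4_f (x : V4) : and4 f x = f := by cases x <;> rfl
@[simp] lemma or4_f (x : V4) : or4 x f = x := by cases x <;> rfl
@[simp] lemma f_or4 (x : V4) : or4 f x = x := by cases x <;> rfl

lemma and4_ofProp (p q : Prop) : and4 (ofProp p) (ofProp q) = ofProp (p ∧ q) := by
  unfold ofProp; split_ifs <;> simp_all

end V4

def Preserves {k : ℕ} (g : (Fin k → V4) → V4) (S : Set V4) : Prop :=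
  ∀ a : Fin k → V4, (∀ i, a i ∈ S) → g a ∈ S

structure IsSubuniverse (S : Set V4) : Prop where
  f_mem : f ∈ S
  neg4_mem : ∀ x ∈ S, neg4 x ∈ S
  and4_mem : ∀ x ∈ S, ∀ y ∈ S, and4 x y ∈ S
  or4_mem : ∀ x ∈ S, ∀ y ∈ S, or4 x y ∈ S
  imp4_mem : ∀ x ∈ S, ∀ y ∈ S, imp4 x y ∈ S

lemma isSubuniverse_tfb : IsSubuniverse {t, f, b} := by
  constructor <;> simp only [Set.mem_insert_iff, Set.mem_singleton_iff] <;> decide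

lemma isSubuniverse_tfn : IsSubuniverse {t, f, n} := by
  constructor <;> simp only [Set.mem_insert_iff, Set.mem_singleton_iff] <;> decide

def Definable {k : ℕ} (g : (Fin k → V4) → V4) : Prop :=
  ∃ A : Fm, fvars A ⊆ {m : ℕ | m < k} ∧ ∀ v : ℕ → V4, val v A = g (fun i => v i)

namespace IsMF

variable {k : ℕ} {g g' : (Fin k → V4) → V4}

lemma congr (hg : IsMF g) (h : ∀ a, g a = g' a) : IsMF g' := funext h ▸ hg

lemma preserves (hg : IsMF g) {S : Set V4} (hS : IsSubuniverse S) : Preserves g S := by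
  induction hg with
  | proj i => exact fun a ha => ha i
  | bot => exact fun _ _ => hS.f_mem
  | neg _ ih => exact fun a ha => hS.neg4_mem _ (ih a ha)
  | and _ _ ih₁ ih₂ => exact fun a ha => hS.and4_mem _ (ih₁ a ha) _ (ih₂ a ha)
  | or _ _ ih₁ ih₂ => exact fun a ha => hS.or4_mem _ (ih₁ a ha) _ (ih₂ a ha)
  | imp _ _ ih₁ ih₂ => exact fun a ha => hS.imp4_mem _ (ih₁ a ha) _ (ih₂ a ha)

lemma definable (hg : IsMF g) : Definable g := by
  induction hg with
  | proj i => exact ⟨.var i, by simp [fvars], fun _ => rfl⟩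
  | bot => exact ⟨.bot, by simp [fvars], fun _ => rfl⟩
  | neg _ ih =>
    obtain ⟨A, hA, hv⟩ := ih
    exact ⟨.neg A, hA, fun v => by simp [val, hv]⟩
  | and _ _ ih₁ ih₂ =>
    obtain ⟨A, hA, hvA⟩ := ih₁; obtain ⟨B, hB, hvB⟩ := ih₂
    exact ⟨.and A B, Set.union_subset hA hB, fun v => by simp [val, hvA, hvB]⟩
  | or _ _ ih₁ ih₂ =>
    obtain ⟨A, hA, hvA⟩ := ih₁; obtain ⟨B, hB, hvB⟩ := ih₂
    exact ⟨.or A B, Set.union_subset hA hB, fun v => by simp [val, hvA, hvB]⟩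
  | imp _ _ ih₁ ih₂ =>
    obtain ⟨A, hA, hvA⟩ := ih₁; obtain ⟨B, hB, hvB⟩ := ih₂
    exact ⟨.imp A B, Set.union_subset hA hB, fun v => by simp [val, hvA, hvB]⟩

end IsMF

lemma isMF_val {k : ℕ} (A : Fm) :
    IsMF fun a : Fin k → V4 => val (fun m => if h : m < k then a ⟨m, h⟩ else f) A := by
  induction A with
  | var p =>
    by_cases h : p < k
    · simpa only [val, dif_pos h] using IsMF.proj ⟨p, h⟩
    · simpa only [val, dif_neg h] using IsMF.bot
  | neg A ih => exact ih.neg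
  | and A B ihA ihB => exact ihA.and ihB
  | or A B ihA ihB => exact ihA.or ihB
  | imp A B ihA ihB => exact ihA.imp ihB
  | bot => exact IsMF.bot

lemma Definable.isMF {k : ℕ} {g : (Fin k → V4) → V4} (hg : Definable g) : IsMF g := by
  obtain ⟨A, -, hA⟩ := hg
  exact (isMF_val A).congr fun a => by rw [hA]; simp

lemma definable_iff_isMF {k : ℕ} {g : (Fin k → V4) → V4} : Definable g ↔ IsMF g :=
  ⟨Definable.isMF, IsMF.definable⟩

namespace IsMF

variable {k : ℕ} {g : (Fin k → V4) → V4}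

lemma const_t : IsMF fun _ : Fin k → V4 => t := IsMF.imp IsMF.bot IsMF.bot

lemma ofProp_eq (hg : IsMF g) : ∀ w : V4, IsMF fun a => ofProp (g a = w)
  | t => (hg.imp bot).neg.and (hg.neg.imp bot) |>.congr fun a => by
      cases g a <;> simp [ofProp] <;> rfl
  | f => (hg.imp bot).and (hg.neg.imp bot).neg |>.congr fun a => by
      cases g a <;> simp [ofProp] <;> rfl
  | b => (hg.imp bot).neg.and (hg.neg.imp bot).neg |>.congr fun a => by
      cases g a <;> simp [ofProp] <;> rfl
  | n => (hg.imp bot).and (hg.neg.imp bot) |>.congr fun a => by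
      cases g a <;> simp [ofProp] <;> rfl

lemma ofProp_forall_mem {ι : Type*} (s : Finset ι) {P : ι → (Fin k → V4) → Prop}
    (hP : ∀ i ∈ s, IsMF fun a => ofProp (P i a)) : IsMF fun a => ofProp (∀ i ∈ s, P i a) := by
  classical
  induction s using Finset.induction_on with
  | empty => exact const_t.congr fun a => by simp [ofProp]
  | insert i s _ ih =>
    refine ((hP i (s.mem_insert_self i)).and
      (ih fun j hj => hP j (Finset.mem_insert_of_mem hj))).congr fun a => ?_
    simp only [and4_ofProp, Finset.forall_mem_insert]

lemma ofProp_eq_point (c : Fin k → V4) : IsMF fun a => ofProp (a = c) :=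
  (ofProp_forall_mem Finset.univ fun i _ => (proj i).ofProp_eq (c i)).congr fun a => by
    simp only [Finset.mem_univ, true_implies, funext_iff]

lemma ite_eq_point (c : Fin k → V4) {g₁ g₂ : (Fin k → V4) → V4} (h₁ : IsMF g₁) (h₂ : IsMF g₂) :
    IsMF fun a => if a = c then g₁ a else g₂ a := by
  refine (((ofProp_eq_point c).and h₁).or ((ofProp_eq_point c).neg.and h₂)).congr fun a => ?_
  by_cases ha : a = c <;> simp [ha, ofProp, neg4]

lemma of_forall_exists_eq (h : ∀ c, ∃ h : (Fin k → V4) → V4, IsMF h ∧ h c = g c) : IsMF g := by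
  choose w hw hwc using h
  have agree_on : ∀ s : Finset (Fin k → V4), IsMF fun a => if a ∈ s then g a else f := by
    intro s
    induction s using Finset.induction_on with
    | empty => exact bot.congr fun a => by simp
    | insert c s _ ih =>
      refine (ite_eq_point c (hw c) ih).congr fun a => ?_
      by_cases ha : a = c
      · simp [ha, hwc]
      · simp [ha]
  exact (agree_on Finset.univ).congr fun a => by simp

end IsMF

lemma exists_eq_of_preserves {k : ℕ} {g : (Fin k → V4) → V4} (hb : Preserves g {t, f, b})
    (hn : Preserves g {t, f, n}) (c : Fin k → V4) (hc : g c = b ∨ g c = n) :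
    ∃ i, c i = g c := by
  by_contra! hne
  rcases hc with hc | hc
  · have := hn c fun i => by have := hne i; rw [hc] at this; revert this; cases c i <;> simp
    simp [hc] at this
  · have := hb c fun i => by have := hne i; rw [hc] at this; revert this; cases c i <;> simp
    simp [hc] at this

lemma isMF_of_preserves {k : ℕ} {g : (Fin k → V4) → V4} (hb : Preserves g {t, f, b})
    (hn : Preserves g {t, f, n}) : IsMF g := by
  refine IsMF.of_forall_exists_eq fun c => ?_
  match hc : g c with
  | t => exact ⟨_, IsMF.const_t, rfl⟩
  | f => exact ⟨_, IsMF.bot, rfl⟩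
  | b | n =>
    obtain ⟨i, hi⟩ := exists_eq_of_preserves hb hn c (by simp [hc])
    exact ⟨_, (IsMF.proj i).and (IsMF.proj i).neg, by simp only [hi, hc]; rfl⟩

lemma isMF_iff_preserves {k : ℕ} {g : (Fin k → V4) → V4} :
    IsMF g ↔ Preserves g {t, f, b} ∧ Preserves g {t, f, n} :=
  ⟨fun hg => ⟨hg.preserves isSubuniverse_tfb, hg.preserves isSubuniverse_tfn⟩,
    fun h => isMF_of_preserves h.1 h.2⟩

/-- a function on the Belnap-Dunn truth values is a matrix
function of `M^{BD,→,⊥}` iff it maps `{t, f, b}ⁿ` into `{t, f, b}` and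
`{t, f, n}ⁿ` into `{t, f, n}`; equivalently, an `n`-ary connective ◊ with
intended interpretation `g` is definable in BD^{→,⊥,◊} (by a formula over
¬, ∧, ∨, →, ⊥) iff `g` preserves both `{t, f, b}` and `{t, f, n}`. -/
theorem stmt12 :
    (∀ (k : ℕ) (g : (Fin k → V4) → V4),
        IsMF g ↔
          ((∀ a : Fin k → V4,
              (∀ i, a i ∈ ({V4.t, V4.f, V4.b} : Set V4)) →
              g a ∈ ({V4.t, V4.f, V4.b} : Set V4)) ∧
           (∀ a : Fin k → V4,
              (∀ i, a i ∈ ({V4.t, V4.f, V4.n} : Set V4)) →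
              g a ∈ ({V4.t, V4.f, V4.n} : Set V4)))) ∧
    (∀ (k : ℕ) (g : (Fin k → V4) → V4),
        (∃ A : Fm, fvars A ⊆ {m : ℕ | m < k} ∧
            ∀ v : ℕ → V4, val v A = g (fun i => v i)) ↔
          ((∀ a : Fin k → V4,
              (∀ i, a i ∈ ({V4.t, V4.f, V4.b} : Set V4)) →
              g a ∈ ({V4.t, V4.f, V4.b} : Set V4)) ∧
           (∀ a : Fin k → V4,
              (∀ i, a i ∈ ({V4.t, V4.f, V4.n} : Set V4)) →
              g a ∈ ({V4.t, V4.f, V4.n} : Set V4)))) :=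
  ⟨fun _ _ => isMF_iff_preserves, fun _ _ => definable_iff_isMF.trans isMF_iff_preserves⟩

end BD12
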